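/- arXiv:1906.04500 — 3 statements merged into one kernel-verified Lean document; each statement's English description precedes it below -/
import Mathlib

section
/- Let n ≥ 1 and let Δ = (δ₁, δ₂, δ₃, δ₄) be a quadruple of vectors in ℤⁿ with δ₁ + δ₂ + δ₃ + δ₄ = 0. Then there exists a constant ε = ε(Δ) ≥ 0 with the following property: for all pairwise distinct α₁, α₂, α₃ ∈ ℂ and all κ with κ_j ∈ ℂ∖{0}, setting S = ℂ∖{α₁,α₂,α₃} and f : S → (ℂ∖{0})ⁿ, f(z)_j = κ_j ∏_{i=1}^{3}(z−α_i)^{−δ_i^j}, there exist v ∈ ℝⁿ, a real number l ≥ 0, and a partition {1,2,3,4} = {a,b} ⊔ {c,d} into two pairs such that, with w = v + l·(δ_c + δ_d) and Γ = {v + t·δ_a : t ≥ 0} ∪ {v + t·δ_b : t ≥ 0} ∪ {v + t·(δ_c + δ_d) : t ∈ [0,l]} ∪ {w + t·δ_c : t ≥ 0} ∪ {w + t·δ_d : t ≥ 0}, both Log(f(S)) ⊆ U_ε(Γ) and Γ ⊆ U_ε(Log(f(S))). -/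
/-!
Order the punctures so that `a₀, a₁` is a closest pair: `d = |a₀ - a₁| ≤ R = |a₀ - a₂|` and
`d ≤ |a₁ - a₂|`. Then `Log f(z) = c - ∑ᵢ log |z - aᵢ| • δᵢ` is an affine image of the vector
`(log |z - aᵢ|)ᵢ ∈ ℝ³`, and an affine map enlarges sup-norm distances by a factor depending
only on `Δ`. So it suffices to treat the line `z ↦ (z - a₀, z - a₁, z - a₂)`.

For that line, the triangle inequality alone shows that `(|z - aᵢ|)ᵢ` agrees up to a factor `8`
with one of five model profiles, according to whether `z` is near one of the punctures, far away,
or at an intermediate scale around `a₀` and `a₁`; conversely every model profile is realised up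
to a factor `8` by a point on a line through two of the punctures. The logarithms of the model
profiles sweep out exactly the tropical curve with vertices `(log R, log R, log R)` and
`(log d, log d, log R)`, and `log 8 < 3`.
-/

/-- Coordinate-wise logarithm of moduli, `Log(z)_i = log |z_i|`. -/
noncomputable def LogMap {n : ℕ} (z : Fin n → ℂ) : Fin n → ℝ :=
  fun i => Real.log ‖z i‖

/-- Open ε-neighbourhood of a set with respect to the sup norm on `Fin n → ℝ`. -/
def nbhd {n : ℕ} (ε : ℝ) (X : Set (Fin n → ℝ)) : Set (Fin n → ℝ) :=
  {y | ∃ x ∈ X, ‖y - x‖ < ε}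

/-- Ray emanating from `v` in direction `d`. -/
def ray {n : ℕ} (v d : Fin n → ℝ) : Set (Fin n → ℝ) :=
  {x | ∃ t : ℝ, 0 ≤ t ∧ x = v + t • d}

/-- Segment from `v` in direction `d` of parameter length `l`. -/
def seg {n : ℕ} (v d : Fin n → ℝ) (l : ℝ) : Set (Fin n → ℝ) :=
  {x | ∃ t : ℝ, 0 ≤ t ∧ t ≤ l ∧ x = v + t • d}

/-- Real vector obtained from an integer vector. -/
def intCast {n : ℕ} (d : Fin n → ℤ) : Fin n → ℝ := fun i => (d i : ℝ)

/-- Image of a tropical rational curve with four ends of directions `δ a, δ b, δ c, δ d`: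
two vertices `v` and `w = v + l • (δ c + δ d)` joined by a bounded edge, with the rays
`δ a, δ b` at `v` and the rays `δ c, δ d` at `w`. -/
noncomputable def fourEndCurve {n : ℕ} (δ : Fin 4 → Fin n → ℤ) (a b c d : Fin 4)
    (v : Fin n → ℝ) (l : ℝ) : Set (Fin n → ℝ) :=
  ray v (intCast (δ a)) ∪ ray v (intCast (δ b)) ∪
    seg v (intCast (δ c + δ d)) l ∪
    ray (v + l • intCast (δ c + δ d)) (intCast (δ c)) ∪
    ray (v + l • intCast (δ c + δ d)) (intCast (δ d))

open Set

lemma abs_log_sub_log_le_of_le_mul {r s c : ℝ} (hr : 0 < r) (hs : 0 < s) (h₁ : r ≤ c * s)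
    (h₂ : s ≤ c * r) : |Real.log r - Real.log s| ≤ Real.log c := by
  have hc : 0 < c := pos_of_mul_pos_left (hr.trans_le h₁) hs.le
  have e₁ := Real.log_le_log hr h₁
  have e₂ := Real.log_le_log hs h₂
  rw [Real.log_mul hc.ne' hs.ne'] at e₁
  rw [Real.log_mul hc.ne' hr.ne'] at e₂
  exact abs_sub_le_iff.2 ⟨by linarith, by linarith⟩

def Comparable (r s : ℝ) : Prop := 0 < r ∧ r ≤ 8 * s ∧ s ≤ 8 * r

lemma Comparable.abs_log_sub_lt {r s : ℝ} (h : Comparable r s) :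
    |Real.log r - Real.log s| < 3 := by
  obtain ⟨hr, h₁, h₂⟩ := h
  have hlog8 : Real.log 8 < 3 := by
    rw [show (8 : ℝ) = 2 ^ 3 by norm_num, Real.log_pow]
    push_cast
    linarith [Real.log_two_lt_d9]
  exact (abs_log_sub_log_le_of_le_mul hr (by linarith) h₁ h₂).trans_lt hlog8

lemma norm_log_comp_sub_lt {m : ℕ} {r s : Fin m → ℝ} (h : ∀ i, Comparable (r i) (s i)) :
    ‖Real.log ∘ r - Real.log ∘ s‖ < 3 :=
  (pi_norm_lt_iff (by norm_num)).2 fun i => (h i).abs_log_sub_lt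

lemma forall_comparable_vecCons {r : Fin 3 → ℝ} {x y w : ℝ} (h₀ : Comparable (r 0) x)
    (h₁ : Comparable (r 1) y) (h₂ : Comparable (r 2) w) :
    ∀ i, Comparable (r i) (![x, y, w] i) := by
  intro i; fin_cases i <;> assumption

/-- `lineDegree` is the toric degree of `z ↦ (z - a 0, z - a 1, z - a 2)` in the sign
convention `f_j = κ_j ∏ (z - α_i) ^ (-δ_i^j)`. -/
def lineDegree : Fin 4 → Fin 3 → ℤ := ![-Pi.single 0 1, -Pi.single 1 1, -Pi.single 2 1, 1]

/-- With `d = |a 0 - a 1|` the smallest and `R = |a 0 - a 2|`, these are the typical values of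
`(|z - a i|)ᵢ`: `z` near `a 2`, `z` far away, `z` at scale `ρ ∈ [d, R]` around `a 0` and `a 1`,
`z` near `a 0`, `z` near `a 1`. -/
def expTropicalLine (d R : ℝ) : Set (Fin 3 → ℝ) :=
  (fun ρ => ![R, R, ρ]) '' Ioc 0 R ∪ (fun ρ => ![ρ, ρ, ρ]) '' Ici R ∪
    (fun ρ => ![ρ, ρ, R]) '' Icc d R ∪ (fun ρ => ![ρ, d, R]) '' Ioc 0 d ∪
    (fun ρ => ![d, ρ, R]) '' Ioc 0 d

lemma image_log_expTropicalLine {d R : ℝ} (hd : 0 < d) (hdR : d ≤ R) :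
    (Real.log ∘ ·) '' expTropicalLine d R =
      fourEndCurve lineDegree 2 3 0 1 (fun _ => Real.log R) (Real.log R - Real.log d) := by
  have hR : 0 < R := hd.trans_le hdR
  ext x
  constructor
  · rintro ⟨s, hs, rfl⟩
    rcases hs with ((((⟨ρ, ⟨hρ, hρR⟩, rfl⟩ | ⟨ρ, hRρ, rfl⟩) | ⟨ρ, ⟨hdρ, hρR⟩, rfl⟩) |
      ⟨ρ, ⟨hρ, hρd⟩, rfl⟩) | ⟨ρ, ⟨hρ, hρd⟩, rfl⟩)
    · refine Or.inl (Or.inl (Or.inl (Or.inl ⟨Real.log R - Real.log ρ,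
        sub_nonneg.2 (Real.log_le_log hρ hρR), ?_⟩)))
      funext i; fin_cases i <;> simp [lineDegree, intCast]
    · refine Or.inl (Or.inl (Or.inl (Or.inr ⟨Real.log ρ - Real.log R,
        sub_nonneg.2 (Real.log_le_log hR hRρ), ?_⟩)))
      funext i; fin_cases i <;> simp [lineDegree, intCast]
    · refine Or.inl (Or.inl (Or.inr ⟨Real.log R - Real.log ρ,
        sub_nonneg.2 (Real.log_le_log (hd.trans_le hdρ) hρR),
        by linarith [Real.log_le_log hd hdρ], ?_⟩))
      funext i; fin_cases i <;> simp [lineDegree, intCast]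
    · refine Or.inl (Or.inr ⟨Real.log d - Real.log ρ, sub_nonneg.2 (Real.log_le_log hρ hρd), ?_⟩)
      funext i; fin_cases i <;> simp [lineDegree, intCast]
    · refine Or.inr ⟨Real.log d - Real.log ρ, sub_nonneg.2 (Real.log_le_log hρ hρd), ?_⟩
      funext i; fin_cases i <;> simp [lineDegree, intCast]
  · have hlog : ∀ {r : ℝ} (t : ℝ), 0 < r → Real.log (r * Real.exp t) = Real.log r + t :=
      fun t hr => by rw [Real.log_mul hr.ne' (Real.exp_pos _).ne', Real.log_exp]
    have hshrink : ∀ {r t : ℝ}, 0 < r → 0 ≤ t → r * Real.exp (-t) ≤ r :=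
      fun hr ht => mul_le_of_le_one_right hr.le (Real.exp_le_one_iff.2 (neg_nonpos.2 ht))
    rintro ((((⟨t, ht, rfl⟩ | ⟨t, ht, rfl⟩) | ⟨t, ht, htl, rfl⟩) | ⟨t, ht, rfl⟩) | ⟨t, ht, rfl⟩)
    · refine ⟨_, Or.inl (Or.inl (Or.inl (Or.inl
        ⟨R * Real.exp (-t), ⟨by positivity, hshrink hR ht⟩, rfl⟩))), ?_⟩
      funext i; fin_cases i <;> simp [lineDegree, intCast, hlog _ hR]
    · refine ⟨_, Or.inl (Or.inl (Or.inl (Or.inr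
        ⟨R * Real.exp t, le_mul_of_one_le_right hR.le (Real.one_le_exp ht), rfl⟩))), ?_⟩
      funext i; fin_cases i <;> simp [lineDegree, intCast, hlog _ hR]
    · have hdρ : d ≤ R * Real.exp (-t) := by
        rw [← Real.log_le_log_iff hd (by positivity), hlog _ hR]; linarith
      refine ⟨_, Or.inl (Or.inl (Or.inr ⟨R * Real.exp (-t), ⟨hdρ, hshrink hR ht⟩, rfl⟩)), ?_⟩
      funext i; fin_cases i <;> simp [lineDegree, intCast, hlog _ hR]
    · refine ⟨_, Or.inl (Or.inr ⟨d * Real.exp (-t), ⟨by positivity, hshrink hd ht⟩, rfl⟩), ?_⟩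
      funext i; fin_cases i <;> simp [lineDegree, intCast, hlog _ hd]
    · refine ⟨_, Or.inr ⟨d * Real.exp (-t), ⟨by positivity, hshrink hd ht⟩, rfl⟩, ?_⟩
      funext i; fin_cases i <;> simp [lineDegree, intCast, hlog _ hd]

lemma dist_triangle_triple {X : Type*} [PseudoMetricSpace X] (z x y : X) :
    dist z y ≤ dist z x + dist x y ∧ dist z x ≤ dist z y + dist x y ∧
      dist x y ≤ dist z x + dist z y :=
  ⟨dist_triangle z x y, dist_triangle_right z x y, dist_triangle_left x y z⟩

theorem exists_mem_expTropicalLine_comparable {X : Type*} [MetricSpace X] {a : Fin 3 → X}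
    (h₁ : dist (a 0) (a 1) ≤ dist (a 0) (a 2)) (h₂ : dist (a 0) (a 1) ≤ dist (a 1) (a 2))
    {z : X} (hz : ∀ i, z ≠ a i) :
    ∃ s ∈ expTropicalLine (dist (a 0) (a 1)) (dist (a 0) (a 2)),
      ∀ i, Comparable (dist z (a i)) (s i) := by
  have hr : ∀ i, 0 < dist z (a i) := fun i => dist_pos.2 (hz i)
  obtain ⟨t₁, t₂, t₃⟩ := dist_triangle_triple z (a 0) (a 1)
  obtain ⟨t₄, t₅, t₆⟩ := dist_triangle_triple z (a 0) (a 2)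
  obtain ⟨t₇, t₈, t₉⟩ := dist_triangle_triple z (a 1) (a 2)
  obtain ⟨h₃, -, h₄⟩ := dist_triangle_triple (a 0) (a 1) (a 2)
  have hr₀ := hr 0
  have hr₁ := hr 1
  have hr₂ := hr 2
  set d := dist (a 0) (a 1)
  set R := dist (a 0) (a 2)
  set e := dist (a 1) (a 2)
  set r₀ := dist z (a 0)
  set r₁ := dist z (a 1)
  set r₂ := dist z (a 2)
  by_cases near₀ : r₀ < d / 2
  · refine ⟨![r₀, d, R], Or.inl (Or.inr ⟨r₀, ⟨hr₀, by linarith⟩, rfl⟩),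
      forall_comparable_vecCons ?_ ?_ ?_⟩ <;> refine ⟨by linarith, by linarith, by linarith⟩
  by_cases near₁ : r₁ < d / 2
  · refine ⟨![d, r₁, R], Or.inr ⟨r₁, ⟨hr₁, by linarith⟩, rfl⟩,
      forall_comparable_vecCons ?_ ?_ ?_⟩ <;> refine ⟨by linarith, by linarith, by linarith⟩
  by_cases near₂ : r₂ < R / 2
  · refine ⟨![R, R, r₂], Or.inl (Or.inl (Or.inl (Or.inl ⟨r₂, ⟨hr₂, by linarith⟩, rfl⟩))),
      forall_comparable_vecCons ?_ ?_ ?_⟩ <;> refine ⟨by linarith, by linarith, by linarith⟩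
  by_cases far : 2 * R < r₀
  · refine ⟨![r₀, r₀, r₀], Or.inl (Or.inl (Or.inl (Or.inr ⟨r₀, show R ≤ r₀ by linarith, rfl⟩))),
      forall_comparable_vecCons ?_ ?_ ?_⟩ <;> refine ⟨by linarith, by linarith, by linarith⟩
  push Not at near₀ near₁ near₂ far
  -- `z` lies at scale `ρ`, the value of `r₀` clamped to `[d, R]`.
  obtain ⟨ρ, hdρ, hρR, hρ₀, hρ₀', hρ₁⟩ :
      ∃ ρ, d ≤ ρ ∧ ρ ≤ R ∧ ρ ≤ 2 * r₀ ∧ r₀ ≤ 2 * ρ ∧ ρ ≤ 3 * r₁ := by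
    rcases le_total r₀ d with h | h
    · exact ⟨d, le_rfl, h₁, by linarith, by linarith, by linarith⟩
    rcases le_total r₀ R with h' | h'
    · exact ⟨r₀, h, h', by linarith, by linarith, by linarith⟩
    · exact ⟨R, h₁, le_rfl, by linarith, by linarith, by linarith⟩
  refine ⟨![ρ, ρ, R], Or.inl (Or.inl (Or.inr ⟨ρ, ⟨hdρ, hρR⟩, rfl⟩)),
    forall_comparable_vecCons ?_ ?_ ?_⟩ <;> refine ⟨by linarith, by linarith, by linarith⟩

section NormedSpace

variable {E : Type*} [NormedAddCommGroup E] [NormedSpace ℝ E]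

lemma exists_dist_eq_sub_of_le {a b : E} (hab : a ≠ b) {s : ℝ} (hs : 0 ≤ s)
    (hsab : s ≤ dist a b) : ∃ z, dist z a = s ∧ dist z b = dist a b - s := by
  have hD : 0 < dist a b := dist_pos.2 hab
  refine ⟨AffineMap.lineMap a b (s / dist a b), ?_, ?_⟩
  · rw [dist_lineMap_left, Real.norm_of_nonneg (by positivity), div_mul_cancel₀ _ hD.ne']
  · rw [dist_lineMap_right, Real.norm_of_nonneg (by rw [sub_nonneg, div_le_one hD]; exact hsab),
      sub_mul, div_mul_cancel₀ _ hD.ne', one_mul]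

lemma exists_dist_eq_add {a b : E} (hab : a ≠ b) {s : ℝ} (hs : 0 ≤ s) :
    ∃ z, dist z a = s ∧ dist z b = dist a b + s := by
  have hD : 0 < dist a b := dist_pos.2 hab
  refine ⟨AffineMap.lineMap a b (-(s / dist a b)), ?_, ?_⟩
  · rw [dist_lineMap_left, norm_neg, Real.norm_of_nonneg (by positivity),
      div_mul_cancel₀ _ hD.ne']
  · rw [dist_lineMap_right, sub_neg_eq_add, Real.norm_of_nonneg (by positivity), add_mul,
      div_mul_cancel₀ _ hD.ne', one_mul]

theorem exists_comparable_of_mem_expTropicalLine {a : Fin 3 → E} (ha : Function.Injective a)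
    (h₁ : dist (a 0) (a 1) ≤ dist (a 0) (a 2)) (h₂ : dist (a 0) (a 1) ≤ dist (a 1) (a 2))
    {s : Fin 3 → ℝ} (hs : s ∈ expTropicalLine (dist (a 0) (a 1)) (dist (a 0) (a 2))) :
    ∃ z, ∀ i, Comparable (dist z (a i)) (s i) := by
  have hd : 0 < dist (a 0) (a 1) := dist_pos.2 (ha.ne (by decide))
  obtain ⟨h₃, -, h₄⟩ := dist_triangle_triple (a 0) (a 1) (a 2)
  set d := dist (a 0) (a 1)
  set R := dist (a 0) (a 2)
  set e := dist (a 1) (a 2)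
  have far : ∀ ρ, d ≤ ρ → ∃ z, dist z (a 0) = 2 * ρ ∧ dist z (a 2) = R + 2 * ρ ∧
      ρ ≤ dist z (a 1) ∧ dist z (a 1) ≤ 3 * ρ := fun ρ hdρ => by
    obtain ⟨z, hz₀, hz₂⟩ := exists_dist_eq_add (ha.ne (by decide : (0 : Fin 3) ≠ 2))
      (s := 2 * ρ) (by linarith)
    obtain ⟨t₁, t₂, -⟩ := dist_triangle_triple z (a 0) (a 1)
    exact ⟨z, hz₀, hz₂, by linarith, by linarith⟩
  rcases hs with ((((⟨ρ, ⟨hρ, hρR⟩, rfl⟩ | ⟨ρ, (hRρ : R ≤ ρ), rfl⟩) | ⟨ρ, ⟨hdρ, hρR⟩, rfl⟩) |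
    ⟨ρ, ⟨hρ, hρd⟩, rfl⟩) | ⟨ρ, ⟨hρ, hρd⟩, rfl⟩)
  · obtain ⟨z, hz₂, hz₀⟩ := exists_dist_eq_sub_of_le (ha.ne (by decide : (2 : Fin 3) ≠ 0))
      (s := ρ / 4) (by positivity) (by rw [dist_comm]; linarith)
    rw [dist_comm (a 2)] at hz₀
    obtain ⟨-, t₈, t₉⟩ := dist_triangle_triple z (a 1) (a 2)
    refine ⟨z, forall_comparable_vecCons ?_ ?_ ?_⟩ <;>
      refine ⟨by linarith, by linarith, by linarith⟩
  · obtain ⟨z, hz₀, hz₂, hz₁, hz₁'⟩ := far ρ (by linarith)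
    refine ⟨z, forall_comparable_vecCons ?_ ?_ ?_⟩ <;>
      refine ⟨by linarith, by linarith, by linarith⟩
  · obtain ⟨z, hz₀, hz₂, hz₁, hz₁'⟩ := far ρ hdρ
    refine ⟨z, forall_comparable_vecCons ?_ ?_ ?_⟩ <;>
      refine ⟨by linarith, by linarith, by linarith⟩
  · obtain ⟨z, hz₀, hz₁⟩ := exists_dist_eq_sub_of_le (ha.ne (by decide : (0 : Fin 3) ≠ 1))
      (s := ρ / 4) (by positivity) (by linarith)
    obtain ⟨t₄, -, t₆⟩ := dist_triangle_triple z (a 0) (a 2)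
    refine ⟨z, forall_comparable_vecCons ?_ ?_ ?_⟩ <;>
      refine ⟨by linarith, by linarith, by linarith⟩
  · obtain ⟨z, hz₁, hz₀⟩ := exists_dist_eq_sub_of_le (ha.ne (by decide : (1 : Fin 3) ≠ 0))
      (s := ρ / 4) (by positivity) (by rw [dist_comm]; linarith)
    rw [dist_comm (a 1)] at hz₀
    obtain ⟨t₇, -, t₉⟩ := dist_triangle_triple z (a 1) (a 2)
    refine ⟨z, forall_comparable_vecCons ?_ ?_ ?_⟩ <;>
      refine ⟨by linarith, by linarith, by linarith⟩

end NormedSpace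

noncomputable def logDist {X : Type*} [Dist X] {m : ℕ} (a : Fin m → X) (z : X) : Fin m → ℝ :=
  Real.log ∘ fun i => dist z (a i)

theorem logDist_image_subset_nbhd {X : Type*} [MetricSpace X] {a : Fin 3 → X}
    (ha : Function.Injective a)
    (h₁ : dist (a 0) (a 1) ≤ dist (a 0) (a 2)) (h₂ : dist (a 0) (a 1) ≤ dist (a 1) (a 2)) :
    logDist a '' {z | ∀ i, z ≠ a i} ⊆
      nbhd 3 (fourEndCurve lineDegree 2 3 0 1 (fun _ => Real.log (dist (a 0) (a 2)))
        (Real.log (dist (a 0) (a 2)) - Real.log (dist (a 0) (a 1)))) := by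
  rw [← image_log_expTropicalLine (dist_pos.2 (ha.ne (by decide))) h₁]
  rintro _ ⟨z, hz, rfl⟩
  obtain ⟨s, hs, hcomp⟩ := exists_mem_expTropicalLine_comparable h₁ h₂ hz
  exact ⟨_, ⟨s, hs, rfl⟩, norm_log_comp_sub_lt hcomp⟩

theorem subset_nbhd_logDist_image {E : Type*} [NormedAddCommGroup E] [NormedSpace ℝ E]
    {a : Fin 3 → E} (ha : Function.Injective a)
    (h₁ : dist (a 0) (a 1) ≤ dist (a 0) (a 2)) (h₂ : dist (a 0) (a 1) ≤ dist (a 1) (a 2)) :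
    fourEndCurve lineDegree 2 3 0 1 (fun _ => Real.log (dist (a 0) (a 2)))
        (Real.log (dist (a 0) (a 2)) - Real.log (dist (a 0) (a 1))) ⊆
      nbhd 3 (logDist a '' {z | ∀ i, z ≠ a i}) := by
  rw [← image_log_expTropicalLine (dist_pos.2 (ha.ne (by decide))) h₁]
  rintro _ ⟨s, hs, rfl⟩
  obtain ⟨z, hcomp⟩ := exists_comparable_of_mem_expTropicalLine ha h₁ h₂ hs
  refine ⟨logDist a z, ⟨z, fun i => dist_pos.1 (hcomp i).1, rfl⟩, ?_⟩
  rw [norm_sub_rev]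
  exact norm_log_comp_sub_lt hcomp

lemma intCast_add {n : ℕ} (d e : Fin n → ℤ) : intCast (d + e) = intCast d + intCast e := by
  ext i; simp [intCast]

section AffineImage

variable {m n : ℕ} (c : Fin n → ℝ) (L : (Fin m → ℝ) →ₗ[ℝ] (Fin n → ℝ))

lemma image_ray (v w : Fin m → ℝ) : (fun x => c + L x) '' ray v w = ray (c + L v) (L w) := by
  ext y
  constructor
  · rintro ⟨_, ⟨t, ht, rfl⟩, rfl⟩
    exact ⟨t, ht, by simp only [map_add, map_smul, add_assoc]⟩
  · rintro ⟨t, ht, rfl⟩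
    exact ⟨v + t • w, ⟨t, ht, rfl⟩, by simp only [map_add, map_smul, add_assoc]⟩

lemma image_seg (v w : Fin m → ℝ) (l : ℝ) :
    (fun x => c + L x) '' seg v w l = seg (c + L v) (L w) l := by
  ext y
  constructor
  · rintro ⟨_, ⟨t, ht, htl, rfl⟩, rfl⟩
    exact ⟨t, ht, htl, by simp only [map_add, map_smul, add_assoc]⟩
  · rintro ⟨t, ht, htl, rfl⟩
    exact ⟨v + t • w, ⟨t, ht, htl, rfl⟩, by simp only [map_add, map_smul, add_assoc]⟩

lemma image_fourEndCurve {δ₁ : Fin 4 → Fin m → ℤ} {δ₂ : Fin 4 → Fin n → ℤ}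
    (hL : ∀ k, L (intCast (δ₁ k)) = intCast (δ₂ k)) (a b c' d : Fin 4) (v : Fin m → ℝ) (l : ℝ) :
    (fun x => c + L x) '' fourEndCurve δ₁ a b c' d v l = fourEndCurve δ₂ a b c' d (c + L v) l := by
  simp only [fourEndCurve, image_union, image_ray, image_seg, intCast_add, map_add, map_smul,
    hL, add_assoc]

lemma image_subset_nbhd_image {K : ℝ} (hK₀ : 0 ≤ K) (hK : ∀ x, ‖L x‖ ≤ K * ‖x‖) {ε : ℝ}
    {X Y : Set (Fin m → ℝ)} (h : X ⊆ nbhd ε Y) :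
    (fun x => c + L x) '' X ⊆ nbhd ((K + 1) * ε) ((fun x => c + L x) '' Y) := by
  rintro _ ⟨x, hx, rfl⟩
  obtain ⟨y, hy, hxy⟩ := h hx
  refine ⟨c + L y, ⟨y, hy, rfl⟩, ?_⟩
  calc ‖c + L x - (c + L y)‖ = ‖L (x - y)‖ := by rw [map_sub, add_sub_add_left_eq_sub]
    _ ≤ K * ‖x - y‖ := hK _
    _ ≤ K * ε := by gcongr
    _ < (K + 1) * ε := by nlinarith [norm_nonneg (x - y)]

end AffineImage

lemma exists_perm_dist_le {X : Type*} [PseudoMetricSpace X] (α : Fin 3 → X) :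
    ∃ σ : Equiv.Perm (Fin 3), dist (α (σ 0)) (α (σ 1)) ≤ dist (α (σ 0)) (α (σ 2)) ∧
      dist (α (σ 0)) (α (σ 1)) ≤ dist (α (σ 1)) (α (σ 2)) := by
  obtain ⟨σ, hσ⟩ := Finite.exists_min fun σ : Equiv.Perm (Fin 3) => dist (α (σ 0)) (α (σ 1))
  have h₁ := hσ (σ * Equiv.swap 1 2)
  have h₂ := hσ (σ * Equiv.swap 0 2)
  simp only [Equiv.Perm.coe_mul, Function.comp_apply] at h₁ h₂
  simp [Equiv.swap_apply_of_ne_of_ne] at h₁ h₂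
  exact ⟨σ, h₁, by rwa [dist_comm (α (σ 2))] at h₂⟩

lemma norm_linearCombination_le {ι M : Type*} [Fintype ι] [SeminormedAddCommGroup M]
    [NormedSpace ℝ M] (w : ι → M) (x : ι → ℝ) :
    ‖Fintype.linearCombination ℝ w x‖ ≤ (∑ i, ‖w i‖) * ‖x‖ := by
  rw [Fintype.linearCombination_apply, Finset.sum_mul]
  refine (norm_sum_le _ _).trans (Finset.sum_le_sum fun i _ => ?_)
  rw [norm_smul, mul_comm]
  gcongr
  exact norm_le_pi_norm x i

lemma log_norm_mul_prod_zpow {𝕜 ι : Type*} [NormedField 𝕜] [Fintype ι] {k : 𝕜} (hk : k ≠ 0)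
    {w : ι → 𝕜} (hw : ∀ i, w i ≠ 0) (e : ι → ℤ) :
    Real.log ‖k * ∏ i, w i ^ e i‖ = Real.log ‖k‖ + ∑ i, e i * Real.log ‖w i‖ := by
  have hw' : ∀ i, ‖w i‖ ^ e i ≠ 0 := fun i => zpow_ne_zero _ (norm_ne_zero_iff.2 (hw i))
  rw [norm_mul, norm_prod, Real.log_mul (norm_ne_zero_iff.2 hk)
    (Finset.prod_ne_zero_iff.2 fun i _ => by rw [norm_zpow]; exact hw' i),
    Real.log_prod fun i _ => by rw [norm_zpow]; exact hw' i]
  simp only [norm_zpow, Real.log_zpow]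

section Relabel

variable {n : ℕ} (δ : Fin 4 → Fin n → ℤ) (σ : Equiv.Perm (Fin 3))

lemma logMap_image_eq_image_logDist (α : Fin 3 → ℂ) {κ : Fin n → ℂ} (hκ : ∀ j, κ j ≠ 0) :
    LogMap '' ((fun z : ℂ => fun j : Fin n =>
        κ j * ∏ i : Fin 3, (z - α i) ^ (-(δ i.castSucc j))) '' {z : ℂ | ∀ i, z ≠ α i}) =
      (fun x => (fun j => Real.log ‖κ j‖) +
          Fintype.linearCombination ℝ (fun i => -intCast (δ (σ i).castSucc)) x) ''
        (logDist (α ∘ σ) '' {z | ∀ i, z ≠ (α ∘ σ) i}) := by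
  have hS : {z : ℂ | ∀ i, z ≠ (α ∘ σ) i} = {z | ∀ i, z ≠ α i} :=
    Set.ext fun z => σ.forall_congr_right (q := fun i => z ≠ α i)
  rw [image_image, image_image, hS]
  refine image_congr fun z hz => funext fun j => ?_
  simp only [LogMap, log_norm_mul_prod_zpow (hκ j) (fun i => sub_ne_zero.2 (hz i)),
    Pi.add_apply, Fintype.linearCombination_apply, logDist, intCast, Function.comp_apply,
    Finset.sum_apply, Pi.smul_apply, Pi.neg_apply, smul_eq_mul, dist_eq_norm]
  rw [← Equiv.sum_comp σ]
  push_cast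
  congr 1
  exact Finset.sum_congr rfl fun i _ => by ring

lemma linearCombination_lineDegree (hΔ : δ 0 + δ 1 + δ 2 + δ 3 = 0) (k : Fin 4) :
    Fintype.linearCombination ℝ (fun i => -intCast (δ (σ i).castSucc)) (intCast (lineDegree k)) =
      intCast (δ (![(σ 0).castSucc, (σ 1).castSucc, (σ 2).castSucc, Fin.last 3] k)) := by
  have hsum : intCast (δ 0) + intCast (δ 1) + intCast (δ 2) + intCast (δ 3) = 0 := by
    funext j
    simpa [intCast] using congrArg (fun v : Fin n → ℤ => (v j : ℝ)) hΔ
  have hσ : intCast (δ (σ 0).castSucc) + intCast (δ (σ 1).castSucc) + intCast (δ (σ 2).castSucc) =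
      intCast (δ 0) + intCast (δ 1) + intCast (δ 2) := by
    simpa [Fin.sum_univ_three] using Equiv.sum_comp σ fun i => intCast (δ i.castSucc)
  fin_cases k
  all_goals simp [lineDegree, intCast, Fintype.linearCombination_apply, Fin.sum_univ_three]
  rw [eq_neg_of_add_eq_zero_right hsum, ← hσ]
  abel

lemma norm_linearCombination_relabel_le (x : Fin 3 → ℝ) :
    ‖Fintype.linearCombination ℝ (fun i => -intCast (δ (σ i).castSucc)) x‖ ≤
      (∑ i : Fin 3, ‖intCast (δ i.castSucc)‖) * ‖x‖ := by
  simpa only [norm_neg, Equiv.sum_comp σ fun i => ‖intCast (δ i.castSucc)‖]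
    using norm_linearCombination_le (fun i => -intCast (δ (σ i).castSucc)) x

end Relabel

theorem stmt_1_general (n : ℕ) (δ : Fin 4 → Fin n → ℤ)
    (hΔ : δ 0 + δ 1 + δ 2 + δ 3 = 0) :
    ∃ ε : ℝ, 0 ≤ ε ∧
      ∀ α : Fin 3 → ℂ, Function.Injective α →
      ∀ κ : Fin n → ℂ, (∀ j, κ j ≠ 0) →
      ∃ (v : Fin n → ℝ) (l : ℝ) (a b c d : Fin 4),
        0 ≤ l ∧
        a ≠ b ∧ a ≠ c ∧ a ≠ d ∧ b ≠ c ∧ b ≠ d ∧ c ≠ d ∧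
        LogMap '' ((fun z : ℂ => fun j : Fin n =>
              κ j * ∏ i : Fin 3, (z - α i) ^ (-(δ i.castSucc j))) ''
            {z : ℂ | ∀ i, z ≠ α i})
          ⊆ nbhd ε (fourEndCurve δ a b c d v l) ∧
        fourEndCurve δ a b c d v l
          ⊆ nbhd ε (LogMap '' ((fun z : ℂ => fun j : Fin n =>
              κ j * ∏ i : Fin 3, (z - α i) ^ (-(δ i.castSucc j))) ''
            {z : ℂ | ∀ i, z ≠ α i})) := by
  refine ⟨(∑ i : Fin 3, ‖intCast (δ i.castSucc)‖ + 1) * 3, by positivity, fun α hα κ hκ => ?_⟩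
  obtain ⟨σ, h₁, h₂⟩ := exists_perm_dist_le α
  have ha : Function.Injective (α ∘ σ) := hα.comp σ.injective
  rw [logMap_image_eq_image_logDist δ σ α hκ]
  set c : Fin n → ℝ := fun j => Real.log ‖κ j‖
  set τ : Fin 4 → Fin 4 := ![(σ 0).castSucc, (σ 1).castSucc, (σ 2).castSucc, Fin.last 3]
  have hcurve := image_fourEndCurve c _ (δ₂ := δ ∘ τ) (linearCombination_lineDegree δ σ hΔ)
    2 3 0 1
  have hA := image_subset_nbhd_image c _ (by positivity) (norm_linearCombination_relabel_le δ σ)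
    (logDist_image_subset_nbhd ha h₁ h₂)
  have hC := image_subset_nbhd_image c _ (by positivity) (norm_linearCombination_relabel_le δ σ)
    (subset_nbhd_logDist_image ha h₁ h₂)
  rw [hcurve] at hA hC
  have hτ : ∀ i j : Fin 3, i ≠ j → (σ i).castSucc ≠ (σ j).castSucc :=
    fun i j hij => (Fin.castSucc_injective 3).ne (σ.injective.ne hij)
  exact ⟨_, _, τ 2, τ 3, τ 0, τ 1,
    sub_nonneg.2 (Real.log_le_log (dist_pos.2 (ha.ne (by decide))) h₁),
    Fin.castSucc_ne_last _, hτ 2 0 (by decide), hτ 2 1 (by decide),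
    (Fin.castSucc_ne_last _).symm, (Fin.castSucc_ne_last _).symm, hτ 0 1 (by decide), hA, hC⟩

/-- For any toric degree `Δ = (δ₁, δ₂, δ₃, δ₄)` with `∑ δᵢ = 0` there is
a constant `ε ≥ 0` such that the amoeba of any complex rational curve of toric degree `Δ`
is within `ε` (sup norm) of the image of some tropical rational curve of degree `Δ`
(two vertices joined by a bounded edge, with two rays at each vertex), and vice versa. -/
theorem stmt_1 (n : ℕ) (hn : 1 ≤ n) (δ : Fin 4 → Fin n → ℤ)
    (hΔ : δ 0 + δ 1 + δ 2 + δ 3 = 0) :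
    ∃ ε : ℝ, 0 ≤ ε ∧
      ∀ α : Fin 3 → ℂ, Function.Injective α →
      ∀ κ : Fin n → ℂ, (∀ j, κ j ≠ 0) →
      ∃ (v : Fin n → ℝ) (l : ℝ) (a b c d : Fin 4),
        0 ≤ l ∧
        a ≠ b ∧ a ≠ c ∧ a ≠ d ∧ b ≠ c ∧ b ≠ d ∧ c ≠ d ∧
        LogMap '' ((fun z : ℂ => fun j : Fin n =>
              κ j * ∏ i : Fin 3, (z - α i) ^ (-(δ i.castSucc j))) ''
            {z : ℂ | ∀ i, z ≠ α i})
          ⊆ nbhd ε (fourEndCurve δ a b c d v l) ∧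
        fourEndCurve δ a b c d v l
          ⊆ nbhd ε (LogMap '' ((fun z : ℂ => fun j : Fin n =>
              κ j * ∏ i : Fin 3, (z - α i) ^ (-(δ i.castSucc j))) ''
            {z : ℂ | ∀ i, z ≠ α i})) :=
  stmt_1_general n δ hΔ
end

section
/- Let α₁, α₂, α₃ ∈ ℂ be pairwise distinct, κ₁, κ₂, κ₃ ∈ ℂ∖{0}, and let L ⊆ (ℂ∖{0})³ be the image of the map z ↦ (κ₁(z−α₁), κ₂(z−α₂), κ₃(z−α₃)) defined on ℂ∖{α₁,α₂,α₃}. Set u₀ = (1,1,1), u₁ = (−1,0,0), u₂ = (0,−1,0), u₃ = (0,0,−1). Then there exist v ∈ ℝ³, l ≥ 0, a partition {0,1,2,3} = {a,b} ⊔ {c,d}, and, with w = v + l·(u_c+u_d) and Γ = {v + t·u_a : t ≥ 0} ∪ {v + t·u_b : t ≥ 0} ∪ {v + t·(u_c+u_d) : t ∈ [0,l]} ∪ {w + t·u_c : t ≥ 0} ∪ {w + t·u_d : t ≥ 0}, a map φ : L → Γ such that ‖Log(q) − φ(q)‖_∞ ≤ 8 log 2 for all q ∈ L and moreover Γ ∖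 (U_{8 log 2}({v}) ∪ U_{8 log 2}({w})) ⊆ φ(L). -/
/-- The four end directions `u₀ = (1,1,1)`, `u₁ = (-1,0,0)`, `u₂ = (0,-1,0)`,
`u₃ = (0,0,-1)` of a tropical line in `ℝ³`. -/
noncomputable def lineDir : Fin 4 → Fin 3 → ℝ :=
  ![![1, 1, 1], ![-1, 0, 0], ![0, -1, 0], ![0, 0, -1]]

/-- Image of a tropical line in `ℝ³`: two vertices `v` and `w = v + l•(u_c + u_d)`
joined by a bounded edge, with rays `u_a, u_b` at `v` and rays `u_c, u_d` at `w`. -/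
noncomputable def tropLine3 (a b c d : Fin 4) (v : Fin 3 → ℝ) (l : ℝ) :
    Set (Fin 3 → ℝ) :=
  ray v (lineDir a) ∪ ray v (lineDir b) ∪
    seg v (lineDir c + lineDir d) l ∪
    ray (v + l • (lineDir c + lineDir d)) (lineDir c) ∪
    ray (v + l • (lineDir c + lineDir d)) (lineDir d)

/-!
Relabel the roots so that `δ = |α_i - α_j|` is the shortest of the three distances and let
`D = |α_i - α_k|`; for `κ = 1` the vertices are `v = (log δ, log δ, log D)` (with `log D` in
coordinate `k`) and `w = (log D, log D, log D)`. The spine point of a parameter `z` is chosen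
according to which of the regions `|z - α_i| ≤ δ/2`, `|z - α_j| ≤ δ/2`, `|z - α_k| ≤ D/4`,
`|z - α_i| ≤ D` or their complement first contains `z`. In each region the triangle inequality
makes every `|z - α_m|` comparable, up to a factor `8`, to the corresponding coordinate of the
exponential of the spine point, so `Log` moves by at most `log 8 ≤ 8 log 2`. Conversely, a point
of `Γ` at parameter `t ≥ 8 log 2` from both vertices is the image of the point at distance
`e^{±t} δ` or `e^{±t} D` from a root on the real line through it and a second root. The
coefficients `κ_m` only translate everything by `(log |κ_m|)_m`.
-/

open Function Real

lemma forall_fin_three_iff_of_ne {i j k : Fin 3} (hij : i ≠ j) (hik : i ≠ k) (hjk : j ≠ k)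
    {P : Fin 3 → Prop} : (∀ m, P m) ↔ P i ∧ P j ∧ P k := by
  refine ⟨fun h => ⟨h i, h j, h k⟩, fun ⟨hi, hj, hk⟩ m => ?_⟩
  obtain rfl | rfl | rfl : m = i ∨ m = j ∨ m = k := by omega
  exacts [hi, hj, hk]

lemma lineDir_zero : lineDir 0 = fun _ => 1 := by
  ext m; fin_cases m <;> rfl

lemma lineDir_succ (p : Fin 3) : lineDir p.succ = -Pi.single p 1 := by
  ext m; fin_cases p <;> fin_cases m <;> simp [lineDir]

lemma add_smul_lineDir_succ (x : Fin 3 → ℝ) (p : Fin 3) (t : ℝ) :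
    x + t • lineDir p.succ = update x p (x p - t) := by
  ext m; rcases eq_or_ne m p with rfl | h <;> simp [lineDir_succ, *, sub_eq_add_neg]

lemma const_add_smul_lineDir_zero (a t : ℝ) :
    (fun _ => a) + t • lineDir 0 = fun _ : Fin 3 => a + t := by
  ext m; simp [lineDir_zero]

lemma update_const_add_smul_edgeDir (a b t : ℝ) (k : Fin 3) :
    update (fun _ => a) k b + t • (lineDir 0 + lineDir k.succ) = update (fun _ => a + t) k b := by
  ext m; rcases eq_or_ne m k with rfl | h <;> simp [lineDir_zero, lineDir_succ, *]

lemma norm_lineDir_le (p : Fin 4) : ‖lineDir p‖ ≤ 1 := by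
  refine (pi_norm_le_iff_of_nonneg zero_le_one).2 fun m => ?_
  fin_cases p <;> fin_cases m <;> simp [lineDir]

lemma norm_edgeDir_le (k : Fin 3) : ‖lineDir 0 + lineDir k.succ‖ ≤ 1 := by
  refine (pi_norm_le_iff_of_nonneg zero_le_one).2 fun m => ?_
  rcases eq_or_ne m k with rfl | h <;> simp [lineDir_zero, lineDir_succ, *]

lemma mem_nbhd_singleton_iff {n : ℕ} {ε : ℝ} {x y : Fin n → ℝ} :
    x ∈ nbhd ε {y} ↔ ‖x - y‖ < ε := by
  simp [nbhd]

lemma le_of_add_smul_notMem_nbhd {n : ℕ} {ε t : ℝ} {x d : Fin n → ℝ} (ht : 0 ≤ t) (hd : ‖d‖ ≤ 1)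
    (h : x + t • d ∉ nbhd ε {x}) : ε ≤ t := by
  rw [mem_nbhd_singleton_iff, not_lt, add_sub_cancel_left, norm_smul, Real.norm_eq_abs,
    abs_of_nonneg ht] at h
  nlinarith

lemma le_sub_of_add_smul_notMem_nbhd {n : ℕ} {ε t l : ℝ} {x d : Fin n → ℝ} (htl : t ≤ l)
    (hd : ‖d‖ ≤ 1) (h : x + t • d ∉ nbhd ε {x + l • d}) : ε ≤ l - t := by
  rw [show x + t • d = x + l • d + (l - t) • -d by module] at h
  exact le_of_add_smul_notMem_nbhd (sub_nonneg.2 htl) (by rwa [norm_neg]) h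

lemma sub_mem_nbhd_singleton_iff {n : ℕ} {ε : ℝ} {x u y : Fin n → ℝ} :
    x - u ∈ nbhd ε {y} ↔ x ∈ nbhd ε {u + y} := by
  simp only [mem_nbhd_singleton_iff, sub_sub]

lemma mem_tropLine3_add_iff {a b c d : Fin 4} {u v x : Fin 3 → ℝ} {l : ℝ} :
    x ∈ tropLine3 a b c d (u + v) l ↔ x - u ∈ tropLine3 a b c d v l := by
  simp only [tropLine3, ray, seg, Set.mem_union, Set.mem_ofPred_eq, sub_eq_iff_eq_add', add_assoc]

lemma abs_log_sub_log_le {x y C : ℝ} (hx : 0 < x) (hy : 0 < y) (hxy : x ≤ C * y)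
    (hyx : y ≤ C * x) : |log x - log y| ≤ log C := by
  have hC : 0 < C := pos_of_mul_pos_left (hx.trans_le hxy) hy.le
  rw [abs_sub_le_iff, ← log_div hx.ne' hy.ne', ← log_div hy.ne' hx.ne']
  exact ⟨log_le_log (by positivity) ((div_le_iff₀ hy).2 hxy),
    log_le_log (by positivity) ((div_le_iff₀ hx).2 hyx)⟩

lemma log_eight_le : log 8 ≤ 8 * log 2 := by
  rw [show (8 : ℝ) = 2 ^ 3 by norm_num, log_pow]
  push_cast
  linarith [log_pos (by norm_num : (1 : ℝ) < 2)]

lemma exp_eight_mul_log_two : exp (8 * log 2) = 256 := by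
  rw [← log_rpow two_pos, exp_log (by positivity)]; norm_num

lemma le_exp_of_eight_mul_log_two_le {t : ℝ} (ht : 8 * log 2 ≤ t) : 256 ≤ exp t :=
  exp_eight_mul_log_two ▸ exp_le_exp.2 ht

lemma exp_neg_le_of_eight_mul_log_two_le {t : ℝ} (ht : 8 * log 2 ≤ t) : exp (-t) ≤ 1 / 256 := by
  rw [exp_neg, one_div]; exact inv_anti₀ (by norm_num) (le_exp_of_eight_mul_log_two_le ht)

lemma update_pos {ι : Type*} [DecidableEq ι] {f : ι → ℝ} (hf : ∀ m, 0 < f m) {a : ℝ} (ha : 0 < a)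
    (p : ι) (m : ι) : 0 < update f p a m := by
  rcases eq_or_ne m p with rfl | h
  · rwa [update_self]
  · rw [update_of_ne h]; exact hf m

section Spine

variable (α : Fin 3 → ℂ) (i j k : Fin 3)

noncomputable def vertexRadii : Fin 3 → ℝ :=
  update (fun _ => dist (α i) (α j)) k (dist (α i) (α k))

/-- The exponential of the spine point of the parameter `z`. Its five branches land, in order,
on the rays `u_i` and `u_j` at `v`, the ray `u_k` at `w`, the bounded edge and the ray `u_0`
at `w`. -/
noncomputable def spineRadii (z : ℂ) : Fin 3 → ℝ :=
  if dist z (α i) ≤ dist (α i) (α j) / 2 then update (vertexRadii α i j k) i (dist z (α i))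
  else if dist z (α j) ≤ dist (α i) (α j) / 2 then update (vertexRadii α i j k) j (dist z (α j))
  else if dist z (α k) ≤ dist (α i) (α k) / 4 then
    update (fun _ => dist (α i) (α k)) k (dist z (α k))
  else if dist z (α i) ≤ dist (α i) (α k) then
    update (fun _ => max (dist z (α i)) (dist (α i) (α j))) k (dist (α i) (α k))
  else fun _ => dist z (α i)

noncomputable def spine (z : ℂ) : Fin 3 → ℝ := log ∘ spineRadii α i j k z

noncomputable def spineVertex : Fin 3 → ℝ := log ∘ vertexRadii α i j k

noncomputable def spineEdgeLength : ℝ := log (dist (α i) (α k)) - log (dist (α i) (α j))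

variable {α i j k}

lemma spineVertex_eq :
    spineVertex α i j k = update (fun _ => log (dist (α i) (α j))) k (log (dist (α i) (α k))) :=
  comp_update _ _ _ _

lemma spineVertex_of_ne {m : Fin 3} (hm : m ≠ k) :
    spineVertex α i j k m = log (dist (α i) (α j)) := by
  rw [spineVertex_eq, update_of_ne hm]

lemma spineVertex_add_smul_edgeDir :
    spineVertex α i j k + spineEdgeLength α i j k • (lineDir 0 + lineDir k.succ) =
      fun _ => log (dist (α i) (α k)) := by
  rw [spineVertex_eq, spineEdgeLength, update_const_add_smul_edgeDir, add_sub_cancel,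
    update_eq_self_iff]

lemma vertexRadii_pos (hαij : α i ≠ α j) (hδD : dist (α i) (α j) ≤ dist (α i) (α k)) (m : Fin 3) :
    0 < vertexRadii α i j k m := by
  have hδ := dist_pos.2 hαij
  exact update_pos (fun _ => hδ) (hδ.trans_le hδD) k m

lemma spine_mem_tropLine3 (hik : i ≠ k) (hjk : j ≠ k) (hαij : α i ≠ α j)
    (hδD : dist (α i) (α j) ≤ dist (α i) (α k)) {z : ℂ} (hz : ∀ m, z ≠ α m) :
    spine α i j k z ∈ tropLine3 i.succ j.succ 0 k.succ (spineVertex α i j k)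
      (spineEdgeLength α i j k) := by
  have hr := fun m => dist_pos.2 (hz m)
  have hδ := dist_pos.2 hαij
  simp only [tropLine3, Set.mem_union]
  unfold spine spineRadii
  split_ifs with h₁ h₂ h₃ h₄
  · refine .inl <| .inl <| .inl <| .inl ⟨log (dist (α i) (α j)) - log (dist z (α i)),
      sub_nonneg.2 (log_le_log (hr i) (by linarith)), ?_⟩
    rw [add_smul_lineDir_succ, comp_update, spineVertex_of_ne hik]
    congr 1; ring
  · refine .inl <| .inl <| .inl <| .inr ⟨log (dist (α i) (α j)) - log (dist z (α j)),
      sub_nonneg.2 (log_le_log (hr j) (by linarith)), ?_⟩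
    rw [add_smul_lineDir_succ, comp_update, spineVertex_of_ne hjk]
    congr 1; ring
  · refine .inr ⟨log (dist (α i) (α k)) - log (dist z (α k)),
      sub_nonneg.2 (log_le_log (hr k) (by linarith [dist_nonneg (x := α i) (y := α k)])), ?_⟩
    rw [spineVertex_add_smul_edgeDir, add_smul_lineDir_succ, comp_update]
    congr 1; ring
  · have hρ := le_max_right (dist z (α i)) (dist (α i) (α j))
    refine .inl <| .inl <| .inr
      ⟨log (max (dist z (α i)) (dist (α i) (α j))) - log (dist (α i) (α j)),
        sub_nonneg.2 (log_le_log hδ hρ),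
        sub_le_sub_right (log_le_log (hδ.trans_le hρ) (max_le h₄ hδD)) _, ?_⟩
    rw [spineVertex_eq, update_const_add_smul_edgeDir, comp_update]
    congr 1; ext; simp
  · refine .inl <| .inr ⟨log (dist z (α i)) - log (dist (α i) (α k)),
      sub_nonneg.2 (log_le_log (hδ.trans_le hδD) (by linarith)), ?_⟩
    rw [spineVertex_add_smul_edgeDir, const_add_smul_lineDir_zero]
    ext; simp

variable (hij : i ≠ j) (hik : i ≠ k) (hjk : j ≠ k) (hαij : α i ≠ α j)
  (hδD : dist (α i) (α j) ≤ dist (α i) (α k)) (hδE : dist (α i) (α j) ≤ dist (α j) (α k))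
include hij hik hjk hδD hδE

lemma spineRadii_comparable (z : ℂ) (m : Fin 3) :
    spineRadii α i j k z m ≤ 8 * dist z (α m) ∧ dist z (α m) ≤ 8 * spineRadii α i j k z m := by
  revert m
  rw [forall_fin_three_iff_of_ne hij hik hjk]
  have := dist_triangle_left (α i) (α j) z
  have := dist_triangle_left (α i) (α k) z
  have := dist_triangle_left (α j) (α k) z
  have := dist_triangle z (α i) (α j)
  have := dist_triangle z (α i) (α k)
  have := dist_triangle z (α j) (α k)
  have := dist_triangle_right z (α i) (α j)
  have := dist_triangle_right z (α i) (α k)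
  have := dist_triangle (α i) (α j) (α k)
  have := dist_triangle_left (α j) (α k) (α i)
  have := le_max_left (dist z (α i)) (dist (α i) (α j))
  have := le_max_right (dist z (α i)) (dist (α i) (α j))
  unfold spineRadii vertexRadii
  split_ifs <;>
    simp only [update_self, update_of_ne, ne_eq, hij, hik, hjk, Ne.symm hij, Ne.symm hik,
      Ne.symm hjk, not_false_eq_true] <;>
    refine ⟨⟨?_, ?_⟩, ⟨?_, ?_⟩, ⟨?_, ?_⟩⟩ <;>
    first | linarith | exact max_le (by linarith) (by linarith)

lemma abs_log_dist_sub_spine_le {z : ℂ} (hz : ∀ m, z ≠ α m) (m : Fin 3) :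
    |log (dist z (α m)) - spine α i j k z m| ≤ 8 * log 2 := by
  obtain ⟨h₁, h₂⟩ := spineRadii_comparable hij hik hjk hδD hδE z m
  have hr := dist_pos.2 (hz m)
  exact (abs_log_sub_log_le hr (by linarith) h₂ h₁).trans log_eight_le

lemma exists_spine_eq_of_spineRadii_eq {z : ℂ} {R p : Fin 3 → ℝ}
    (hz : spineRadii α i j k z = R) (hR : ∀ m, 0 < R m) (hp : log ∘ R = p) :
    ∃ z, (∀ m, z ≠ α m) ∧ spine α i j k z = p := by
  refine ⟨z, fun m => dist_pos.1 ?_, by rw [spine, hz, hp]⟩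
  have := (spineRadii_comparable hij hik hjk hδD hδE z m).1
  rw [hz] at this
  linarith [hR m]

include hαij

lemma exists_spine_eq_vertex_add_smul_fst {t : ℝ} (ht : 8 * log 2 ≤ t) :
    ∃ z, (∀ m, z ≠ α m) ∧
      spine α i j k z = spineVertex α i j k + t • lineDir i.succ := by
  set z := AffineMap.lineMap (α i) (α j) (exp (-t))
  have hzi : dist z (α i) = exp (-t) * dist (α i) (α j) := by
    simp [z, dist_lineMap_left]
  have hδ := dist_pos.2 hαij
  have := exp_neg_le_of_eight_mul_log_two_le ht
  refine exists_spine_eq_of_spineRadii_eq hij hik hjk hδD hδE (z := z)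
    (R := update (vertexRadii α i j k) i (exp (-t) * dist (α i) (α j))) ?_
    (update_pos (vertexRadii_pos hαij hδD) (mul_pos (exp_pos _) hδ) i) ?_
  · rw [spineRadii, if_pos (by rw [hzi]; nlinarith), hzi]
  · rw [add_smul_lineDir_succ, comp_update, spineVertex_of_ne hik, log_mul (exp_pos _).ne' hδ.ne',
      log_exp]
    congr 1; ring

lemma exists_spine_eq_vertex_add_smul_snd {t : ℝ} (ht : 8 * log 2 ≤ t) :
    ∃ z, (∀ m, z ≠ α m) ∧
      spine α i j k z = spineVertex α i j k + t • lineDir j.succ := by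
  set z := AffineMap.lineMap (α j) (α i) (exp (-t))
  have hzj : dist z (α j) = exp (-t) * dist (α i) (α j) := by
    simp [z, dist_comm]
  have hδ := dist_pos.2 hαij
  have := exp_neg_le_of_eight_mul_log_two_le ht
  have := dist_triangle_left (α i) (α j) z
  refine exists_spine_eq_of_spineRadii_eq hij hik hjk hδD hδE (z := z)
    (R := update (vertexRadii α i j k) j (exp (-t) * dist (α i) (α j))) ?_
    (update_pos (vertexRadii_pos hαij hδD) (mul_pos (exp_pos _) hδ) j) ?_
  · rw [spineRadii, if_neg (by nlinarith), if_pos (by rw [hzj]; nlinarith), hzj]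
  · rw [add_smul_lineDir_succ, comp_update, spineVertex_of_ne hjk, log_mul (exp_pos _).ne' hδ.ne',
      log_exp]
    congr 1; ring

lemma exists_spine_eq_vertex_add_smul_edgeDir {t : ℝ} (ht : 8 * log 2 ≤ t)
    (htl : 8 * log 2 ≤ spineEdgeLength α i j k - t) :
    ∃ z, (∀ m, z ≠ α m) ∧
      spine α i j k z = spineVertex α i j k + t • (lineDir 0 + lineDir k.succ) := by
  set z := AffineMap.lineMap (α i) (α j) (exp t)
  have hzi : dist z (α i) = exp t * dist (α i) (α j) := by
    simp [z, dist_lineMap_left]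
  have hδ := dist_pos.2 hαij
  have hD := hδ.trans_le hδD
  have := le_exp_of_eight_mul_log_two_le ht
  have hzD : exp t * 256 * dist (α i) (α j) ≤ dist (α i) (α k) := by
    have := exp_le_exp.2 (show t + 8 * log 2 ≤ spineEdgeLength α i j k by linarith)
    rwa [exp_add, exp_eight_mul_log_two, spineEdgeLength, exp_sub, exp_log hD, exp_log hδ,
      le_div_iff₀ hδ] at this
  have := dist_triangle_right z (α i) (α j)
  have := dist_triangle_left (α i) (α k) z
  refine exists_spine_eq_of_spineRadii_eq hij hik hjk hδD hδE (z := z)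
    (R := update (fun _ => exp t * dist (α i) (α j)) k (dist (α i) (α k))) ?_
    (update_pos (fun _ => mul_pos (exp_pos _) hδ) hD k) ?_
  · rw [spineRadii, if_neg (by nlinarith), if_neg (by nlinarith), if_neg (by nlinarith),
      if_pos (by nlinarith), max_eq_left (by nlinarith), hzi]
  · rw [spineVertex_eq, update_const_add_smul_edgeDir, comp_update]
    congr 1
    ext
    simp [log_mul (exp_pos _).ne' hδ.ne', add_comm]

lemma exists_spine_eq_edgeEnd_add_smul_zero {t : ℝ} (ht : 8 * log 2 ≤ t) :
    ∃ z, (∀ m, z ≠ α m) ∧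
      spine α i j k z =
        spineVertex α i j k + spineEdgeLength α i j k • (lineDir 0 + lineDir k.succ) +
          t • lineDir 0 := by
  set z := AffineMap.lineMap (α i) (α k) (exp t)
  have hzi : dist z (α i) = exp t * dist (α i) (α k) := by
    simp [z, dist_lineMap_left]
  have hD := (dist_pos.2 hαij).trans_le hδD
  have := le_exp_of_eight_mul_log_two_le ht
  have := dist_triangle_right z (α i) (α j)
  have := dist_triangle_right z (α i) (α k)
  refine exists_spine_eq_of_spineRadii_eq hij hik hjk hδD hδE (z := z)
    (R := fun _ => exp t * dist (α i) (α k)) ?_ (fun _ => mul_pos (exp_pos _) hD) ?_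
  · rw [spineRadii, if_neg (by nlinarith), if_neg (by nlinarith), if_neg (by nlinarith),
      if_neg (by nlinarith), hzi]
  · rw [spineVertex_add_smul_edgeDir, const_add_smul_lineDir_zero]
    ext
    simp [log_mul (exp_pos _).ne' hD.ne', add_comm]

lemma exists_spine_eq_edgeEnd_add_smul_succ {t : ℝ} (ht : 8 * log 2 ≤ t) :
    ∃ z, (∀ m, z ≠ α m) ∧
      spine α i j k z =
        spineVertex α i j k + spineEdgeLength α i j k • (lineDir 0 + lineDir k.succ) +
          t • lineDir k.succ := by
  set z := AffineMap.lineMap (α k) (α i) (exp (-t))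
  have hzk : dist z (α k) = exp (-t) * dist (α i) (α k) := by
    simp [z, dist_comm]
  have hD := (dist_pos.2 hαij).trans_le hδD
  have := exp_neg_le_of_eight_mul_log_two_le ht
  have := dist_triangle_left (α i) (α k) z
  have := dist_triangle_left (α j) (α k) z
  have := dist_triangle (α i) (α j) (α k)
  refine exists_spine_eq_of_spineRadii_eq hij hik hjk hδD hδE (z := z)
    (R := update (fun _ => dist (α i) (α k)) k (exp (-t) * dist (α i) (α k))) ?_
    (update_pos (fun _ => hD) (mul_pos (exp_pos _) hD) k) ?_
  · rw [spineRadii, if_neg (by nlinarith), if_neg (by nlinarith), if_pos (by rw [hzk]; nlinarith),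
      hzk]
  · rw [spineVertex_add_smul_edgeDir, add_smul_lineDir_succ, comp_update,
      log_mul (exp_pos _).ne' hD.ne', log_exp]
    congr 1; ring

lemma exists_spine_eq {p : Fin 3 → ℝ}
    (hp : p ∈ tropLine3 i.succ j.succ 0 k.succ (spineVertex α i j k) (spineEdgeLength α i j k) \
      (nbhd (8 * log 2) {spineVertex α i j k} ∪
        nbhd (8 * log 2)
          {spineVertex α i j k + spineEdgeLength α i j k • (lineDir 0 + lineDir k.succ)})) :
    ∃ z, (∀ m, z ≠ α m) ∧ spine α i j k z = p := by
  obtain ⟨hpΓ, hpv⟩ := hp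
  rw [Set.mem_union, not_or] at hpv
  obtain ⟨hpv, hpw⟩ := hpv
  simp only [tropLine3, ray, seg, Set.mem_union, Set.mem_ofPred_eq] at hpΓ
  rcases hpΓ with
    (((⟨t, ht, rfl⟩ | ⟨t, ht, rfl⟩) | ⟨t, ht, htl, rfl⟩) | ⟨t, ht, rfl⟩) | ⟨t, ht, rfl⟩
  · exact exists_spine_eq_vertex_add_smul_fst hij hik hjk hαij hδD hδE
      (le_of_add_smul_notMem_nbhd ht (norm_lineDir_le _) hpv)
  · exact exists_spine_eq_vertex_add_smul_snd hij hik hjk hαij hδD hδE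
      (le_of_add_smul_notMem_nbhd ht (norm_lineDir_le _) hpv)
  · refine exists_spine_eq_vertex_add_smul_edgeDir hij hik hjk hαij hδD hδE
      (le_of_add_smul_notMem_nbhd ht (norm_edgeDir_le _) hpv) ?_
    have := le_sub_of_add_smul_notMem_nbhd htl (norm_edgeDir_le _) hpw
    linarith
  · exact exists_spine_eq_edgeEnd_add_smul_zero hij hik hjk hαij hδD hδE
      (le_of_add_smul_notMem_nbhd ht (norm_lineDir_le _) hpw)
  · exact exists_spine_eq_edgeEnd_add_smul_succ hij hik hjk hαij hδD hδE
      (le_of_add_smul_notMem_nbhd ht (norm_lineDir_le _) hpw)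

end Spine

lemma exists_shortest_side {X : Type*} [PseudoMetricSpace X] (x : Fin 3 → X) :
    ∃ i j k : Fin 3, i ≠ j ∧ i ≠ k ∧ j ≠ k ∧
      dist (x i) (x j) ≤ dist (x i) (x k) ∧ dist (x i) (x j) ≤ dist (x j) (x k) := by
  have h₁₀ := dist_comm (x 1) (x 0)
  have h₂₀ := dist_comm (x 2) (x 0)
  have h₂₁ := dist_comm (x 2) (x 1)
  by_cases h₀₁ : dist (x 0) (x 1) ≤ dist (x 0) (x 2) ∧ dist (x 0) (x 1) ≤ dist (x 1) (x 2)
  · exact ⟨0, 1, 2, by decide, by decide, by decide, h₀₁⟩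
  by_cases h₀₂ : dist (x 0) (x 2) ≤ dist (x 1) (x 2)
  · exact ⟨0, 2, 1, by decide, by decide, by decide, by grind, by grind⟩
  · exact ⟨1, 2, 0, by decide, by decide, by decide, by grind, by grind⟩

theorem exists_spine_map_of_line (α κ : Fin 3 → ℂ) (hα : Injective α) (hκ : ∀ m, κ m ≠ 0) :
    ∃ (v : Fin 3 → ℝ) (l : ℝ) (a b c d : Fin 4) (φ : (Fin 3 → ℂ) → (Fin 3 → ℝ)),
      0 ≤ l ∧ a ≠ b ∧ a ≠ c ∧ a ≠ d ∧ b ≠ c ∧ b ≠ d ∧ c ≠ d ∧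
      (∀ q ∈ (fun z m => κ m * (z - α m)) '' {z | ∀ m, z ≠ α m},
        φ q ∈ tropLine3 a b c d v l ∧ ‖LogMap q - φ q‖ ≤ 8 * log 2) ∧
      tropLine3 a b c d v l \
          (nbhd (8 * log 2) {v} ∪ nbhd (8 * log 2) {v + l • (lineDir c + lineDir d)})
        ⊆ φ '' ((fun z m => κ m * (z - α m)) '' {z | ∀ m, z ≠ α m}) := by
  obtain ⟨i, j, k, hij, hik, hjk, hδD, hδE⟩ := exists_shortest_side α
  have hαij := hα.ne hij
  have hinv (z : ℂ) : κ 0 * (z - α 0) / κ 0 + α 0 = z := by field_simp [hκ 0]; ring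
  have hLog {z : ℂ} (hz : ∀ m, z ≠ α m) :
      LogMap (fun m => κ m * (z - α m)) = (fun m => log ‖κ m‖) + fun m => log (dist z (α m)) := by
    ext m
    simp [LogMap, dist_eq_norm,
      log_mul (norm_ne_zero_iff.2 (hκ m)) (norm_ne_zero_iff.2 (sub_ne_zero.2 (hz m)))]
  refine ⟨(fun m => log ‖κ m‖) + spineVertex α i j k,
    spineEdgeLength α i j k, i.succ, j.succ, 0, k.succ,
    fun q => (fun m => log ‖κ m‖) + spine α i j k (q 0 / κ 0 + α 0),
    sub_nonneg.2 (log_le_log (dist_pos.2 hαij) hδD), (Fin.succ_injective _).ne hij,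
    Fin.succ_ne_zero i, (Fin.succ_injective _).ne hik, Fin.succ_ne_zero j,
    (Fin.succ_injective _).ne hjk, (Fin.succ_ne_zero k).symm, ?_, ?_⟩
  · rintro _ ⟨z, hzα, rfl⟩
    refine ⟨mem_tropLine3_add_iff.2 ?_, ?_⟩
    · simpa [hinv] using spine_mem_tropLine3 hik hjk hαij hδD hzα
    · beta_reduce
      rw [hLog hzα, hinv, add_sub_add_left_eq_sub, pi_norm_le_iff_of_nonneg (by positivity)]
      exact abs_log_dist_sub_spine_le hij hik hjk hδD hδE hzα
  · rintro p ⟨hpΓ, hpv⟩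
    obtain ⟨z, hzα, hzp⟩ := exists_spine_eq hij hik hjk hαij hδD hδE (p := p - fun m => log ‖κ m‖)
      ⟨mem_tropLine3_add_iff.1 hpΓ, by
        simpa only [Set.mem_union, sub_mem_nbhd_singleton_iff, add_assoc] using hpv⟩
    exact ⟨_, ⟨z, hzα, rfl⟩, by simp [hinv, hzp]⟩

/-- For the complex line `L ⊆ (ℂ*)³` parametrised by
`z ↦ (κ₁(z-α₁), κ₂(z-α₂), κ₃(z-α₃))` there exist a tropical line `Γ` in `ℝ³` with
vertices `v` and `w = v + l•(u_c+u_d)` and a map `φ : L → Γ` with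
`‖Log(q) - φ(q)‖_∞ ≤ 8 log 2` for all `q ∈ L`, and moreover
`Γ ∖ (U_{8 log 2}({v}) ∪ U_{8 log 2}({w})) ⊆ φ(L)`. -/
theorem stmt_6 (α₁ α₂ α₃ : ℂ) (h12 : α₁ ≠ α₂) (h13 : α₁ ≠ α₃) (h23 : α₂ ≠ α₃)
    (κ₁ κ₂ κ₃ : ℂ) (hκ₁ : κ₁ ≠ 0) (hκ₂ : κ₂ ≠ 0) (hκ₃ : κ₃ ≠ 0) :
    ∃ (v : Fin 3 → ℝ) (l : ℝ) (a b c d : Fin 4)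
      (φ : (Fin 3 → ℂ) → (Fin 3 → ℝ)),
      0 ≤ l ∧
      a ≠ b ∧ a ≠ c ∧ a ≠ d ∧ b ≠ c ∧ b ≠ d ∧ c ≠ d ∧
      (∀ q ∈ (fun z : ℂ => ![κ₁ * (z - α₁), κ₂ * (z - α₂), κ₃ * (z - α₃)]) ''
          {z : ℂ | z ≠ α₁ ∧ z ≠ α₂ ∧ z ≠ α₃},
        φ q ∈ tropLine3 a b c d v l ∧ ‖LogMap q - φ q‖ ≤ 8 * Real.log 2) ∧
      tropLine3 a b c d v l \
          (nbhd (8 * Real.log 2) {v} ∪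
           nbhd (8 * Real.log 2) {v + l • (lineDir c + lineDir d)})
        ⊆ φ '' ((fun z : ℂ => ![κ₁ * (z - α₁), κ₂ * (z - α₂), κ₃ * (z - α₃)]) ''
            {z : ℂ | z ≠ α₁ ∧ z ≠ α₂ ∧ z ≠ α₃}) := by
  have hα : Injective ![α₁, α₂, α₃] := by
    intro a b
    fin_cases a <;> fin_cases b <;> simp [h12, h13, h23, h12.symm, h13.symm, h23.symm]
  have hκ : ∀ m, ![κ₁, κ₂, κ₃] m ≠ 0 := by
    intro m; fin_cases m <;> assumption
  have hline : (fun z : ℂ => ![κ₁ * (z - α₁), κ₂ * (z - α₂), κ₃ * (z - α₃)]) =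
      fun z m => ![κ₁, κ₂, κ₃] m * (z - ![α₁, α₂, α₃] m) := by
    ext z m; fin_cases m <;> rfl
  have hdom : {z : ℂ | z ≠ α₁ ∧ z ≠ α₂ ∧ z ≠ α₃} = {z | ∀ m, z ≠ ![α₁, α₂, α₃] m} := by
    ext; simp [Fin.forall_fin_succ]
  rw [hline, hdom]
  exact exists_spine_map_of_line _ _ hα hκ
end

section
/- Let α₁ ≠ α₂ ∈ ℂ, κ₁, κ₂ ∈ ℂ∖{0}, and let L ⊆ (ℂ∖{0})² be the image of the map z ↦ (κ₁(z−α₁), κ₂(z−α₂)) defined on ℂ∖{α₁,α₂}. Then there exist v ∈ ℝ² and a map φ : L → Γ_v such that the Euclidean norm satisfies ‖Log(q) − φ(q)‖₂ ≤ log 2 for every q ∈ L. -/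
noncomputable def stdTropLine (v : Fin 2 → ℝ) : Set (Fin 2 → ℝ) :=
  ray v ![-1, 0] ∪ ray v ![0, -1] ∪ ray v ![1, 1]

noncomputable def eucNorm2 (x : Fin 2 → ℝ) : ℝ :=
  Real.sqrt (x 0 ^ 2 + x 1 ^ 2)

open Real

theorem logMap_mul {n : ℕ} {c z : Fin n → ℂ} (hc : ∀ i, c i ≠ 0) (hz : ∀ i, z i ≠ 0) :
    LogMap (c * z) = LogMap c + LogMap z := by
  ext i
  simp only [LogMap, Pi.mul_apply, Pi.add_apply, norm_mul]
  exact Real.log_mul (norm_ne_zero_iff.2 (hc i)) (norm_ne_zero_iff.2 (hz i))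

theorem add_mem_stdTropLine {v p : Fin 2 → ℝ} (hp : p ∈ stdTropLine 0) :
    v + p ∈ stdTropLine v := by
  simp only [stdTropLine, ray, Set.mem_union, Set.mem_ofPred_eq, zero_add] at hp ⊢
  rcases hp with (⟨t, ht, rfl⟩ | ⟨t, ht, rfl⟩) | ⟨t, ht, rfl⟩
  · exact Or.inl (Or.inl ⟨t, ht, rfl⟩)
  · exact Or.inl (Or.inr ⟨t, ht, rfl⟩)
  · exact Or.inr ⟨t, ht, rfl⟩

theorem eucNorm2_le_of_sq_add_sq_le {x : Fin 2 → ℝ} {c : ℝ} (hc : 0 ≤ c)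
    (h : x 0 ^ 2 + x 1 ^ 2 ≤ c ^ 2) : eucNorm2 x ≤ c :=
  (Real.sqrt_le_left hc).2 h

theorem exists_mem_stdTropLine_zero_eucNorm2_sub_le {X Y c : ℝ}
    (hX : X ≤ c + max Y 0) (hY : Y ≤ c + max X 0) (hXY : -c ≤ max X Y) :
    ∃ p ∈ stdTropLine 0, eucNorm2 (![X, Y] - p) ≤ c := by
  by_cases hpos : 0 ≤ X ∧ 0 ≤ Y
  · obtain ⟨hX₀, hY₀⟩ := hpos
    rw [max_eq_left hY₀] at hX
    rw [max_eq_left hX₀] at hY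
    refine ⟨((X + Y) / 2) • ![1, 1], Or.inr ⟨(X + Y) / 2, by linarith, by simp⟩, ?_⟩
    refine eucNorm2_le_of_sq_add_sq_le (by linarith) ?_
    simp only [Pi.sub_apply, Pi.smul_apply, Matrix.cons_val_zero, Matrix.cons_val_one,
      smul_eq_mul, mul_one]
    nlinarith
  rcases le_total Y X with hle | hle
  · have hY₀ : Y < 0 := lt_of_not_ge fun hY₀ => hpos ⟨hY₀.trans hle, hY₀⟩
    rw [max_eq_right hY₀.le] at hX
    rw [max_eq_left hle] at hXY
    refine ⟨(-Y) • ![0, -1], Or.inl (Or.inr ⟨-Y, by linarith, by simp⟩), ?_⟩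
    refine eucNorm2_le_of_sq_add_sq_le (by linarith) ?_
    simp only [Pi.sub_apply, Pi.smul_apply, Matrix.cons_val_zero, Matrix.cons_val_one,
      smul_eq_mul]
    nlinarith
  · have hX₀ : X < 0 := lt_of_not_ge fun hX₀ => hpos ⟨hX₀, hX₀.trans hle⟩
    rw [max_eq_right hX₀.le] at hY
    rw [max_eq_right hle] at hXY
    refine ⟨(-X) • ![-1, 0], Or.inl (Or.inl ⟨-X, by linarith, by simp⟩), ?_⟩
    refine eucNorm2_le_of_sq_add_sq_le (by linarith) ?_
    simp only [Pi.sub_apply, Pi.smul_apply, Matrix.cons_val_zero, Matrix.cons_val_one,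
      smul_eq_mul]
    nlinarith

theorem log_le_log_two_add_max_log {a b : ℝ} (ha : 0 < a) (hb : 0 < b) (h : a ≤ b + 1) :
    log a ≤ log 2 + max (log b) 0 := by
  rcases le_total b 1 with hb₁ | hb₁
  · rw [max_eq_right (log_nonpos hb.le hb₁)]
    linarith [log_le_log ha (show a ≤ 2 by linarith)]
  · rw [max_eq_left (log_nonneg hb₁), ← log_mul two_ne_zero hb.ne']
    exact log_le_log ha (by linarith)

theorem neg_log_two_le_max_log {a b : ℝ} (ha : 0 < a) (hb : 0 < b) (h : 1 ≤ a + b) :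
    -log 2 ≤ max (log a) (log b) := by
  have neg_log_two_le {x : ℝ} (hx : 0 < x) (h : 1 ≤ 2 * x) : -log 2 ≤ log x := by
    rw [← log_inv]
    exact log_le_log (by norm_num) (by linarith)
  rcases le_total a b with hab | hab
  · exact le_max_of_le_right (neg_log_two_le hb (by linarith))
  · exact le_max_of_le_left (neg_log_two_le ha (by linarith))

theorem exists_mem_stdTropLine_zero_eucNorm2_logMap_sub_le {w : ℂ} (hw₀ : w ≠ 0) (hw₁ : w ≠ 1) :
    ∃ p ∈ stdTropLine 0, eucNorm2 (LogMap ![w, w - 1] - p) ≤ log 2 := by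
  have ha : 0 < ‖w‖ := norm_pos_iff.2 hw₀
  have hb : 0 < ‖w - 1‖ := norm_pos_iff.2 (sub_ne_zero.2 hw₁)
  have hLog : LogMap ![w, w - 1] = ![log ‖w‖, log ‖w - 1‖] := by
    ext i; fin_cases i <;> rfl
  rw [hLog]
  apply exists_mem_stdTropLine_zero_eucNorm2_sub_le
  · refine log_le_log_two_add_max_log ha hb ?_
    simpa [add_comm] using norm_le_norm_add_norm_sub' w 1
  · refine log_le_log_two_add_max_log hb ha ?_
    simpa using norm_sub_le w 1
  · refine neg_log_two_le_max_log ha hb ?_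
    simpa using norm_le_norm_add_norm_sub w 1

/-- For the complex line `L ⊆ (ℂ*)²` parametrised by
`z ↦ (κ₁(z-α₁), κ₂(z-α₂))` there exist a vertex `v ∈ ℝ²` and a map `φ : L → Γ_v`
with `‖Log(q) - φ(q)‖₂ ≤ log 2` (Euclidean norm) for all `q ∈ L`. -/
theorem stmt_16 (α₁ α₂ : ℂ) (hα : α₁ ≠ α₂) (κ₁ κ₂ : ℂ) (hκ₁ : κ₁ ≠ 0) (hκ₂ : κ₂ ≠ 0) :
    ∃ (v : Fin 2 → ℝ) (φ : (Fin 2 → ℂ) → (Fin 2 → ℝ)),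
      ∀ q ∈ (fun z : ℂ => ![κ₁ * (z - α₁), κ₂ * (z - α₂)]) ''
          {z : ℂ | z ≠ α₁ ∧ z ≠ α₂},
        φ q ∈ stdTropLine v ∧ eucNorm2 (LogMap q - φ q) ≤ Real.log 2 := by
  set d := α₂ - α₁
  have hd : d ≠ 0 := sub_ne_zero.2 hα.symm
  suffices ∀ q ∈ (fun z : ℂ => ![κ₁ * (z - α₁), κ₂ * (z - α₂)]) '' {z : ℂ | z ≠ α₁ ∧ z ≠ α₂},
      ∃ p ∈ stdTropLine (LogMap ![κ₁ * d, κ₂ * d]), eucNorm2 (LogMap q - p) ≤ log 2 by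
    choose! φ hφ using this
    exact ⟨_, φ, hφ⟩
  rintro _ ⟨z, ⟨hz₁, hz₂⟩, rfl⟩
  set w := (z - α₁) / d
  have hw₀ : w ≠ 0 := div_ne_zero (sub_ne_zero.2 hz₁) hd
  have hw₁ : w ≠ 1 := fun h => hz₂ (by linear_combination (div_eq_one_iff_eq hd).1 h)
  have hq : ![κ₁ * (z - α₁), κ₂ * (z - α₂)] = ![κ₁ * d, κ₂ * d] * ![w, w - 1] := by
    ext i; fin_cases i <;> simp [w, d] <;> field_simp; ring
  obtain ⟨p, hp, hle⟩ := exists_mem_stdTropLine_zero_eucNorm2_logMap_sub_le hw₀ hw₁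
  refine ⟨_, add_mem_stdTropLine hp, ?_⟩
  beta_reduce
  rwa [hq, logMap_mul, add_sub_add_left_eq_sub]
  · simp [Fin.forall_fin_two, hκ₁, hκ₂, hd]
  · simp [Fin.forall_fin_two, hw₀, sub_ne_zero.2 hw₁]
end
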